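/- Let N be a (deterministically described) counting measure model where the expected intensity satisfies the renewal equation ℓ(t) = μ + ∫_0^t φ(t−u) ℓ(u) du, with μ ≥ 0 constant and φ : ℝ₊ → ℝ₊ continuous with ‖φ‖_{L¹} < 1. Then there exists a unique continuous bounded solution ℓ on [0, ∞), it satisfies ℓ(t) ≥ μ for all t, and ℓ(t) → μ/(1 − ‖φ‖_{L¹}) as t → ∞. -/

import Mathlib

/-!
With `a = ∫_0^∞ φ < 1`, the map `f ↦ μ + ∫_0^t φ(t-u) f(u) du` is an `a`-contraction of the
bounded continuous functions, so Banach's fixed point theorem gives the solution and its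
uniqueness; the map preserves the closed set `{f ≥ μ}` when `μ ≥ 0`, hence so does the fixed
point. For the limit, `g = ℓ - μ/(1-a)` satisfies `g = φ ⋆ g + e` with `e → 0`. If eventually
`|g| ≤ B`, splitting the convolution at a time after which this holds gives eventually
`|g| ≤ a B + ε`, the early part being controlled by a vanishing tail of `φ`. Iterating from a
global bound `A` gives `limsup |g| ≤ aⁿ A` for every `n`, so `g → 0`.
-/

open Filter MeasureTheory Set intervalIntegral BoundedContinuousFunction Topology

theorem ContractingWith.fixedPoint_mem_of_mapsTo {α : Type*} [MetricSpace α] [CompleteSpace α]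
    [Nonempty α] {K : NNReal} {f : α → α} (hf : ContractingWith K f) {s : Set α}
    (hs : IsClosed s) (hsf : MapsTo f s s) {x : α} (hx : x ∈ s) : fixedPoint f hf ∈ s :=
  hs.mem_of_tendsto (hf.tendsto_iterate_fixedPoint x)
    (Eventually.of_forall fun n => hsf.iterate n hx)

section Kernel

variable {φ : ℝ → ℝ}

lemma abs_intervalIntegral_kernel_mul_le (hφc : Continuous φ) (hφnn : ∀ t, 0 ≤ φ t)
    {g : ℝ → ℝ} (hg : Continuous g) {t p q B : ℝ} (hpq : p ≤ q)
    (hB : ∀ u ∈ Icc p q, |g u| ≤ B) :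
    |∫ u in p..q, φ (t - u) * g u| ≤ B * ∫ v in (t - q)..(t - p), φ v := by
  have hk : Continuous fun u => φ (t - u) := hφc.comp (continuous_const.sub continuous_id)
  calc |∫ u in p..q, φ (t - u) * g u|
      ≤ ∫ u in p..q, |φ (t - u) * g u| := abs_integral_le_integral_abs hpq
    _ ≤ ∫ u in p..q, B * φ (t - u) := by
        refine integral_mono_on hpq ((hk.mul hg).abs.intervalIntegrable p q)
          ((continuous_const.mul hk).intervalIntegrable p q) fun u hu => ?_
        rw [abs_mul, abs_of_nonneg (hφnn _), mul_comm]
        exact mul_le_mul_of_nonneg_right (hB u hu) (hφnn _)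
    _ = B * ∫ v in (t - q)..(t - p), φ v := by
        rw [intervalIntegral.integral_const_mul, integral_comp_sub_left]

lemma intervalIntegral_le_integral_Ioi (hφnn : ∀ t, 0 ≤ φ t) (hφint : IntegrableOn φ (Ioi 0))
    {r : ℝ} (hr : 0 ≤ r) : ∫ v in (0:ℝ)..r, φ v ≤ ∫ v in Ioi (0:ℝ), φ v := by
  rw [integral_of_le hr]
  exact setIntegral_mono_set hφint (Eventually.of_forall hφnn) Ioc_subset_Ioi_self.eventuallyLE

lemma abs_intervalIntegral_kernel_mul_le_integral_Ioi_mul (hφc : Continuous φ)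
    (hφnn : ∀ t, 0 ≤ φ t) (hφint : IntegrableOn φ (Ioi 0)) {g : ℝ → ℝ} (hg : Continuous g)
    {t B : ℝ} (ht : 0 ≤ t) (hB : ∀ u, |g u| ≤ B) :
    |∫ u in (0:ℝ)..t, φ (t - u) * g u| ≤ (∫ v in Ioi (0:ℝ), φ v) * B := by
  have h := abs_intervalIntegral_kernel_mul_le hφc hφnn hg (t := t) ht fun u _ => hB u
  rw [sub_self, sub_zero] at h
  have hB0 : 0 ≤ B := (abs_nonneg _).trans (hB 0)
  exact h.trans (by rw [mul_comm]; gcongr; exact intervalIntegral_le_integral_Ioi hφnn hφint ht)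

lemma tendsto_intervalIntegral_sub_const_self (hφc : Continuous φ)
    (hφint : IntegrableOn φ (Ioi 0)) (T : ℝ) :
    Tendsto (fun t => ∫ v in (t - T)..t, φ v) atTop (𝓝 0) := by
  have hF := intervalIntegral_tendsto_integral_Ioi 0 hφint tendsto_id
  have hFT := intervalIntegral_tendsto_integral_Ioi 0 hφint
    (tendsto_atTop_add_const_right atTop (-T) tendsto_id)
  rw [← sub_self (∫ v in Ioi (0:ℝ), φ v)]
  refine (hF.sub hFT).congr fun t => ?_
  exact integral_interval_sub_left (hφc.intervalIntegrable _ _) (hφc.intervalIntegrable _ _)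

end Kernel

section Residual

variable {φ g e : ℝ → ℝ} {A : ℝ}

lemma eventually_abs_le_integral_Ioi_mul_add (hφc : Continuous φ) (hφnn : ∀ t, 0 ≤ φ t)
    (hφint : IntegrableOn φ (Ioi 0)) (hg : Continuous g) (hA : ∀ u, |g u| ≤ A)
    (he : Tendsto e atTop (𝓝 0))
    (hge : ∀ t ≥ (0:ℝ), g t = (∫ u in (0:ℝ)..t, φ (t - u) * g u) + e t)
    {B : ℝ} (hB : ∀ᶠ t in atTop, |g t| ≤ B) {ε : ℝ} (hε : 0 < ε) :
    ∀ᶠ t in atTop, |g t| ≤ (∫ v in Ioi (0:ℝ), φ v) * B + ε := by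
  obtain ⟨T, hT⟩ := eventually_atTop.1 (hB.and (eventually_ge_atTop 0))
  have hT0 : 0 ≤ T := (hT T le_rfl).2
  have hB0 : 0 ≤ B := (abs_nonneg _).trans (hT T le_rfl).1
  -- the part of the convolution before `T` only sees the tail `∫_{t-T}^t φ` of the kernel
  have hsmall : Tendsto (fun t => A * (∫ v in (t - T)..t, φ v) + |e t|) atTop (𝓝 0) := by
    simpa using ((tendsto_intervalIntegral_sub_const_self hφc hφint T).const_mul A).add he.abs
  filter_upwards [hsmall.eventually (ge_mem_nhds hε), eventually_ge_atTop T] with t hsmall_t htT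
  have hint : ∀ p q, IntervalIntegrable (fun u => φ (t - u) * g u) volume p q :=
    ((hφc.comp (continuous_const.sub continuous_id)).mul hg).intervalIntegrable
  have hhead := abs_intervalIntegral_kernel_mul_le hφc hφnn hg (t := t) hT0 fun u _ => hA u
  have htail := abs_intervalIntegral_kernel_mul_le hφc hφnn hg (t := t) htT
    fun u hu => (hT u hu.1).1
  rw [sub_zero] at hhead
  rw [sub_self] at htail
  have hmass := intervalIntegral_le_integral_Ioi hφnn hφint (sub_nonneg.2 htT)
  rw [hge t (hT0.trans htT), ← integral_add_adjacent_intervals (hint 0 T) (hint T t)]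
  calc _ ≤ |(∫ u in (0:ℝ)..T, φ (t - u) * g u) + ∫ u in T..t, φ (t - u) * g u| + |e t| :=
        abs_add_le _ _
    _ ≤ |∫ u in (0:ℝ)..T, φ (t - u) * g u| + |∫ u in T..t, φ (t - u) * g u| + |e t| := by
        gcongr; exact abs_add_le _ _
    _ ≤ A * (∫ v in (t - T)..t, φ v) + B * (∫ v in Ioi (0:ℝ), φ v) + |e t| := by
        gcongr
        exact htail.trans (mul_le_mul_of_nonneg_left hmass hB0)
    _ ≤ (∫ v in Ioi (0:ℝ), φ v) * B + ε := by linarith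

lemma eventually_abs_le_pow_mul_add (hφc : Continuous φ) (hφnn : ∀ t, 0 ≤ φ t)
    (hφint : IntegrableOn φ (Ioi 0)) (hφL1 : ∫ v in Ioi (0:ℝ), φ v < 1) (hg : Continuous g)
    (hA : ∀ u, |g u| ≤ A) (he : Tendsto e atTop (𝓝 0))
    (hge : ∀ t ≥ (0:ℝ), g t = (∫ u in (0:ℝ)..t, φ (t - u) * g u) + e t)
    {ε : ℝ} (hε : 0 < ε) (n : ℕ) :
    ∀ᶠ t in atTop, |g t| ≤ (∫ v in Ioi (0:ℝ), φ v) ^ n * A + ε := by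
  induction n with
  | zero => exact Eventually.of_forall fun t => by linarith [hA t, pow_zero (∫ v in Ioi (0:ℝ), φ v)]
  | succ n ih =>
    filter_upwards [eventually_abs_le_integral_Ioi_mul_add hφc hφnn hφint hg hA he hge ih
      (mul_pos (sub_pos.2 hφL1) hε)] with t ht
    exact ht.trans_eq (by ring)

lemma tendsto_zero_of_eq_intervalIntegral_add (hφc : Continuous φ) (hφnn : ∀ t, 0 ≤ φ t)
    (hφint : IntegrableOn φ (Ioi 0)) (hφL1 : ∫ v in Ioi (0:ℝ), φ v < 1) (hg : Continuous g)
    (hA : ∀ u, |g u| ≤ A) (he : Tendsto e atTop (𝓝 0))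
    (hge : ∀ t ≥ (0:ℝ), g t = (∫ u in (0:ℝ)..t, φ (t - u) * g u) + e t) :
    Tendsto g atTop (𝓝 0) := by
  refine Metric.tendsto_nhds.2 fun ε hε => ?_
  have hpow : Tendsto (fun n : ℕ => (∫ v in Ioi (0:ℝ), φ v) ^ n * A) atTop (𝓝 0) := by
    simpa using (tendsto_pow_atTop_nhds_zero_of_lt_one
      (setIntegral_nonneg measurableSet_Ioi fun x _ => hφnn x) hφL1).mul_const A
  obtain ⟨n, hn⟩ := (hpow.eventually (gt_mem_nhds (half_pos hε))).exists
  filter_upwards [eventually_abs_le_pow_mul_add hφc hφnn hφint hφL1 hg hA he hge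
    (half_pos hε) n] with t ht
  rw [Real.dist_eq, sub_zero]
  linarith

end Residual

section RenewalOperator

variable {φ : ℝ → ℝ}

lemma continuous_add_intervalIntegral_max (μ : ℝ) (hφc : Continuous φ) {f : ℝ → ℝ}
    (hf : Continuous f) :
    Continuous fun t => μ + ∫ u in (0:ℝ)..max t 0, φ (max t 0 - u) * f u :=
  continuous_const.add <|
    (continuous_parametric_intervalIntegral_of_continuous (f := fun s u => φ (s - u) * f u)
      ((hφc.comp (continuous_fst.sub continuous_snd)).mul (hf.comp continuous_snd))
      continuous_id).comp (continuous_id.max continuous_const)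

/-- The time argument is clamped at `0`, so that the operator acts on `ℝ →ᵇ ℝ`. -/
noncomputable def renewalOp (μ : ℝ) (hφc : Continuous φ) (hφnn : ∀ t, 0 ≤ φ t)
    (hφint : IntegrableOn φ (Ioi 0)) (f : ℝ →ᵇ ℝ) : ℝ →ᵇ ℝ :=
  ofNormedAddCommGroup _ (continuous_add_intervalIntegral_max μ hφc f.continuous)
    (|μ| + (∫ v in Ioi (0:ℝ), φ v) * ‖f‖) fun t =>
      (abs_add_le _ _).trans <| add_le_add_right
        (abs_intervalIntegral_kernel_mul_le_integral_Ioi_mul hφc hφnn hφint f.continuous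
          (le_max_right t 0) fun u => by simpa using f.norm_coe_le_norm u) _

variable (μ : ℝ) (hφc : Continuous φ) (hφnn : ∀ t, 0 ≤ φ t) (hφint : IntegrableOn φ (Ioi 0))

lemma renewalOp_apply (f : ℝ →ᵇ ℝ) (t : ℝ) :
    renewalOp μ hφc hφnn hφint f t = μ + ∫ u in (0:ℝ)..max t 0, φ (max t 0 - u) * f u :=
  rfl

lemma renewalOp_apply_of_nonneg (f : ℝ →ᵇ ℝ) {t : ℝ} (ht : 0 ≤ t) :
    renewalOp μ hφc hφnn hφint f t = μ + ∫ u in (0:ℝ)..t, φ (t - u) * f u := by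
  rw [renewalOp_apply, max_eq_left ht]

lemma contractingWith_renewalOp (hφL1 : ∫ v in Ioi (0:ℝ), φ v < 1) :
    ContractingWith (∫ v in Ioi (0:ℝ), φ v).toNNReal (renewalOp μ hφc hφnn hφint) := by
  refine ⟨Real.toNNReal_lt_one.2 hφL1, LipschitzWith.of_dist_le' fun f g => ?_⟩
  refine (dist_le (mul_nonneg (setIntegral_nonneg measurableSet_Ioi fun x _ => hφnn x)
    dist_nonneg)).2 fun t => ?_
  have hint : ∀ h : ℝ →ᵇ ℝ,
      IntervalIntegrable (fun u => φ (max t 0 - u) * h u) volume 0 (max t 0) := fun h =>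
    ((hφc.comp (continuous_const.sub continuous_id)).mul h.continuous).intervalIntegrable _ _
  rw [renewalOp_apply, renewalOp_apply, Real.dist_eq, add_sub_add_left_eq_sub,
    ← integral_sub (hint f) (hint g)]
  simp only [← mul_sub]
  exact abs_intervalIntegral_kernel_mul_le_integral_Ioi_mul hφc hφnn hφint
    (f.continuous.sub g.continuous) (le_max_right t 0) fun u =>
      (Real.dist_eq _ _).symm.trans_le (dist_coe_le_dist u)


lemma mapsTo_renewalOp (hμ : 0 ≤ μ) :
    MapsTo (renewalOp μ hφc hφnn hφint) {f | ∀ t, μ ≤ f t} {f | ∀ t, μ ≤ f t} := by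
  intro f hf t
  rw [renewalOp_apply]
  have hconv : 0 ≤ ∫ u in (0:ℝ)..max t 0, φ (max t 0 - u) * f u :=
    integral_nonneg (le_max_right t 0) fun u _ => mul_nonneg (hφnn _) (hμ.trans (hf u))
  linarith

lemma exists_isFixedPt_renewalOp_of_solution {ℓ : ℝ → ℝ} (hc : ContinuousOn ℓ (Ici 0)) {C : ℝ}
    (hC : ∀ t ≥ (0:ℝ), |ℓ t| ≤ C)
    (hsol : ∀ t ≥ (0:ℝ), ℓ t = μ + ∫ u in (0:ℝ)..t, φ (t - u) * ℓ u) :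
    ∃ f : ℝ →ᵇ ℝ, Function.IsFixedPt (renewalOp μ hφc hφnn hφint) f ∧ ∀ t ≥ (0:ℝ), f t = ℓ t := by
  let f : ℝ →ᵇ ℝ := ofNormedAddCommGroup (fun t => ℓ (max t 0))
    (hc.comp_continuous (continuous_id.max continuous_const) fun t => le_max_right t 0) C
    fun t => hC _ (le_max_right t 0)
  have hf : ∀ t ≥ (0:ℝ), f t = ℓ t := fun t ht => congrArg ℓ (max_eq_left ht)
  refine ⟨f, ?_, hf⟩
  ext t
  show _ = ℓ (max t 0)
  rw [renewalOp_apply, hsol _ (le_max_right t 0)]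
  congr 1
  refine integral_congr fun u hu => ?_
  rw [uIcc_of_le (le_max_right t 0)] at hu
  simp only [hf u hu.1]

end RenewalOperator

lemma tendsto_of_renewal_eq {φ ℓ : ℝ → ℝ} {μ C : ℝ} (hφc : Continuous φ) (hφnn : ∀ t, 0 ≤ φ t)
    (hφint : IntegrableOn φ (Ioi 0)) (hφL1 : ∫ v in Ioi (0:ℝ), φ v < 1) (hc : Continuous ℓ)
    (hC : ∀ u, |ℓ u| ≤ C) (hsol : ∀ t ≥ (0:ℝ), ℓ t = μ + ∫ u in (0:ℝ)..t, φ (t - u) * ℓ u) :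
    Tendsto ℓ atTop (𝓝 (μ / (1 - ∫ v in Ioi (0:ℝ), φ v))) := by
  set a := ∫ v in Ioi (0:ℝ), φ v
  set m := μ / (1 - a)
  have hμ : μ = m * (1 - a) := (div_mul_cancel₀ μ (sub_pos.2 hφL1).ne').symm
  have he : Tendsto (fun t => m * ((∫ v in (0:ℝ)..t, φ v) - a)) atTop (𝓝 0) := by
    have h := ((intervalIntegral_tendsto_integral_Ioi 0 hφint tendsto_id).sub_const a).const_mul m
    rwa [sub_self, mul_zero] at h
  have hge : ∀ t ≥ (0:ℝ), ℓ t - m =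
      (∫ u in (0:ℝ)..t, φ (t - u) * (ℓ u - m)) + m * ((∫ v in (0:ℝ)..t, φ v) - a) := by
    intro t ht
    have hk : Continuous fun u => φ (t - u) := hφc.comp (continuous_const.sub continuous_id)
    have h1 : IntervalIntegrable (fun u => φ (t - u) * ℓ u) volume 0 t :=
      (hk.mul hc).intervalIntegrable _ _
    have h2 : IntervalIntegrable (fun u => φ (t - u) * m) volume 0 t :=
      (hk.mul continuous_const).intervalIntegrable _ _
    simp only [mul_sub]
    rw [integral_sub h1 h2, intervalIntegral.integral_mul_const,
      integral_comp_sub_left (fun v => φ v), sub_self, sub_zero, hsol t ht]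
    linear_combination hμ
  exact tendsto_sub_nhds_zero_iff.1 <| tendsto_zero_of_eq_intervalIntegral_add hφc hφnn hφint
    hφL1 (hc.sub continuous_const) (fun u => (abs_sub _ _).trans (add_le_add (hC u) le_rfl))
    he hge

/-- The one-dimensional Hawkes renewal equation
`ℓ(t) = μ + ∫_0^t φ(t-u) ℓ(u) du` with constant `μ ≥ 0` and continuous nonnegative
`φ` with `‖φ‖_{L¹} < 1` has a unique continuous bounded solution on `[0,∞)`; it
satisfies `ℓ ≥ μ` and `ℓ(t) → μ/(1 - ‖φ‖_{L¹})` as `t → ∞`. -/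
theorem stmt17 (μ : ℝ) (hμ : 0 ≤ μ)
    (φ : ℝ → ℝ) (hφc : Continuous φ) (hφnn : ∀ t, 0 ≤ φ t)
    (hφint : IntegrableOn φ (Ici 0))
    (hφL1 : (∫ t in Ioi (0:ℝ), φ t) < 1) :
    ∃ ℓ : ℝ → ℝ,
      (ContinuousOn ℓ (Ici 0) ∧ (∃ C, ∀ t ≥ (0:ℝ), |ℓ t| ≤ C) ∧
        (∀ t ≥ (0:ℝ), ℓ t = μ + ∫ u in (0:ℝ)..t, φ (t - u) * ℓ u)) ∧
      (∀ t ≥ (0:ℝ), μ ≤ ℓ t) ∧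
      Tendsto ℓ atTop (nhds (μ / (1 - ∫ t in Ioi (0:ℝ), φ t))) ∧
      (∀ ℓ' : ℝ → ℝ,
        (ContinuousOn ℓ' (Ici 0) ∧ (∃ C, ∀ t ≥ (0:ℝ), |ℓ' t| ≤ C) ∧
          (∀ t ≥ (0:ℝ), ℓ' t = μ + ∫ u in (0:ℝ)..t, φ (t - u) * ℓ' u)) →
        ∀ t ≥ (0:ℝ), ℓ' t = ℓ t) := by
  have hφint' : IntegrableOn φ (Ioi 0) := hφint.mono_set Ioi_subset_Ici_self
  have hT := contractingWith_renewalOp μ hφc hφnn hφint' hφL1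
  set ℓ := ContractingWith.fixedPoint _ hT
  have hsol : ∀ t ≥ (0:ℝ), ℓ t = μ + ∫ u in (0:ℝ)..t, φ (t - u) * ℓ u := fun t ht => by
    rw [← renewalOp_apply_of_nonneg μ hφc hφnn hφint' ℓ ht, hT.fixedPoint_isFixedPt]
  have hbdd : ∀ t, |ℓ t| ≤ ‖ℓ‖ := fun t => by simpa using ℓ.norm_coe_le_norm t
  have hclosed : IsClosed {f : ℝ →ᵇ ℝ | ∀ t, μ ≤ f t} := by
    simp only [ofPred_forall]
    exact isClosed_iInter fun t => isClosed_le continuous_const (continuous_eval_const t)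
  refine ⟨ℓ, ⟨ℓ.continuous.continuousOn, ⟨‖ℓ‖, fun t _ => hbdd t⟩, hsol⟩, fun t _ => ?_,
    tendsto_of_renewal_eq hφc hφnn hφint' hφL1 ℓ.continuous hbdd hsol, ?_⟩
  · exact hT.fixedPoint_mem_of_mapsTo hclosed (mapsTo_renewalOp μ hφc hφnn hφint' hμ)
      (x := const ℝ μ) (fun _ => le_rfl) t
  · rintro ℓ' ⟨hc, ⟨C, hC⟩, hsol'⟩ t ht
    obtain ⟨f, hfix, hf⟩ :=
      exists_isFixedPt_renewalOp_of_solution μ hφc hφnn hφint' hc hC hsol'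
    rw [← hf t ht, hT.fixedPoint_unique hfix]
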